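/- arXiv:1101.4320 — 3 statements merged into one kernel-verified Lean document; each statement's English description precedes it below -/
import Mathlib

section
/- Let (Ω,μ) be a measure space, let p ∈ (1,∞), let n ∈ ℕ, and let {X₁,…,Xₙ} and {Y₁,…,Yₙ} be measurable partitions of Ω. Then for every bounded linear operator R : B(L¹(Ω), L^p(Ω)) → L^p(Ω) and every U ∈ B(L¹(Ω), L^p(Ω)), one has (Σ_{i=1}^{n} ‖χ_{Xᵢ} · R(χ_{Yᵢ}U)‖_p^p)^{1/p} ≤ ‖R‖ ‖U‖. -/
/-!
Rademacher averaging. For a sign vector `ε ∈ {±1}ⁿ` the operator `Σⱼ εⱼ χ_{Yⱼ} U` acts on each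
`U a` by pointwise multiplication with a function of modulus `≤ 1` (the `Yⱼ` are disjoint), so
its norm is at most `‖U‖`, and `Gε := Σⱼ εⱼ R(χ_{Yⱼ} U) = R(Σⱼ εⱼ χ_{Yⱼ} U)` has norm at most
`‖R‖ ‖U‖`. Pairing `ε` with the vector that flips its `i`-th sign and using convexity of
`t ↦ tᵖ` gives pointwise `|Fᵢ|ᵖ ≤ 2⁻ⁿ Σ_ε |Gε|ᵖ` for `Fᵢ := R(χ_{Yᵢ} U)`. Integrating over `Xᵢ`
and summing over the disjoint `Xᵢ` bounds `Σᵢ ‖χ_{Xᵢ} Fᵢ‖ₚᵖ` by the average of `‖Gε‖ₚᵖ`.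
-/

open MeasureTheory
open scoped ENNReal

section Rademacher

variable {E : Type*} [SeminormedAddCommGroup E] [NormedSpace ℝ E] {p : ℝ}

theorem two_mul_enorm_rpow_le_add (hp : 1 ≤ p) (a w : E) :
    2 * ‖w‖ₑ ^ p ≤ ‖a + w‖ₑ ^ p + ‖a - w‖ₑ ^ p := by
  have hw : w = (2⁻¹ : ℝ) • (a + w) - (2⁻¹ : ℝ) • (a - w) := by
    rw [← smul_sub, add_sub_sub_cancel, ← two_smul ℝ w, smul_smul, inv_mul_cancel₀ two_ne_zero,
      one_smul]
  have hmid : ‖w‖ₑ ≤ 2⁻¹ * ‖a + w‖ₑ + 2⁻¹ * ‖a - w‖ₑ :=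
    calc ‖w‖ₑ ≤ ‖(2⁻¹ : ℝ) • (a + w)‖ₑ + ‖(2⁻¹ : ℝ) • (a - w)‖ₑ := by
          nth_rw 1 [hw]; exact enorm_sub_le
      _ = 2⁻¹ * ‖a + w‖ₑ + 2⁻¹ * ‖a - w‖ₑ := by
          rw [enorm_smul, enorm_smul, enorm_inv two_ne_zero, ← Nat.cast_ofNat, Real.enorm_natCast,
            Nat.cast_ofNat]
  calc 2 * ‖w‖ₑ ^ p ≤ 2 * (2⁻¹ * ‖a + w‖ₑ ^ p + 2⁻¹ * ‖a - w‖ₑ ^ p) := by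
        gcongr
        exact (ENNReal.rpow_le_rpow hmid (by linarith)).trans
          (ENNReal.rpow_arith_mean_le_arith_mean2_rpow _ _ _ _ ENNReal.inv_two_add_inv_two hp)
    _ = ‖a + w‖ₑ ^ p + ‖a - w‖ₑ ^ p := by
        rw [mul_add, ← mul_assoc, ← mul_assoc,
          ENNReal.mul_inv_cancel two_ne_zero ENNReal.ofNat_ne_top, one_mul, one_mul]

variable {ι : Type*} [Fintype ι] [DecidableEq ι]

theorem card_mul_enorm_rpow_le_sum_signs (hp : 1 ≤ p) (z : ι → E) (i : ι) :
    Fintype.card (ι → ℤˣ) * ‖z i‖ₑ ^ p ≤ ∑ ε : ι → ℤˣ, ‖∑ j, ((ε j : ℤ) : ℝ) • z j‖ₑ ^ p := by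
  set g : (ι → ℤˣ) → E := fun ε => ∑ j, ((ε j : ℤ) : ℝ) • z j
  let flip : Equiv.Perm (ι → ℤˣ) := Function.Involutive.toPerm (fun ε => Function.update ε i (-ε i))
    fun ε => by simp
  have hflip (ε : ι → ℤˣ) : flip ε = Function.update ε i (-ε i) := rfl
  have hpair (ε : ι → ℤˣ) : 2 * ‖z i‖ₑ ^ p ≤ ‖g ε‖ₑ ^ p + ‖g (flip ε)‖ₑ ^ p := by
    set a := ∑ j ∈ Finset.univ.erase i, ((ε j : ℤ) : ℝ) • z j
    set w := ((ε i : ℤ) : ℝ) • z i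
    have hg : g ε = a + w := by
      rw [add_comm]; exact (Finset.add_sum_erase _ _ (Finset.mem_univ i)).symm
    have hgflip : g (flip ε) = a - w := by
      rw [sub_eq_neg_add]
      refine (Finset.add_sum_erase _ _ (Finset.mem_univ i)).symm.trans ?_
      congr 1
      · simp [hflip, w]
      · refine Finset.sum_congr rfl fun j hj => ?_
        simp [hflip, Function.update_of_ne (Finset.ne_of_mem_erase hj)]
    have hw : ‖w‖ₑ = ‖z i‖ₑ := by
      rw [enorm_smul, ← ofReal_norm, Real.norm_eq_abs, abs_unit_intCast, ENNReal.ofReal_one,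
        one_mul]
    rw [hg, hgflip, ← hw]
    exact two_mul_enorm_rpow_le_add hp a w
  have hsum : 2 * (Fintype.card (ι → ℤˣ) * ‖z i‖ₑ ^ p) ≤ 2 * ∑ ε, ‖g ε‖ₑ ^ p :=
    calc 2 * (Fintype.card (ι → ℤˣ) * ‖z i‖ₑ ^ p) = ∑ _ε : ι → ℤˣ, 2 * ‖z i‖ₑ ^ p := by
          rw [Finset.sum_const, Finset.card_univ, nsmul_eq_mul]; ring
      _ ≤ ∑ ε, (‖g ε‖ₑ ^ p + ‖g (flip ε)‖ₑ ^ p) := Finset.sum_le_sum fun ε _ => hpair ε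
      _ = 2 * ∑ ε, ‖g ε‖ₑ ^ p := by
          rw [Finset.sum_add_distrib, Equiv.sum_comp flip fun ε => ‖g ε‖ₑ ^ p, two_mul]
  exact (ENNReal.mul_le_mul_iff_right two_ne_zero ENNReal.ofNat_ne_top).1 hsum

end Rademacher

theorem norm_sum_smul_indicator_le {α 𝕜 E ι : Type*} [NormedField 𝕜] [NormedAddCommGroup E]
    [NormedSpace 𝕜 E] [Fintype ι] {Y : ι → Set α}
    (hYd : Pairwise (Function.onFun Disjoint Y)) {c : ι → 𝕜} (hc : ∀ j, ‖c j‖ ≤ 1) (f : α → E)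
    (x : α) : ‖∑ j, c j • (Y j).indicator f x‖ ≤ ‖f x‖ := by
  by_cases hx : ∃ j, x ∈ Y j
  · obtain ⟨j₀, hj₀⟩ := hx
    rw [Finset.sum_eq_single j₀ (fun j _ hj => ?_) (by simp), Set.indicator_of_mem hj₀, norm_smul]
    · exact mul_le_of_le_one_left (norm_nonneg _) (hc j₀)
    · rw [Set.indicator_of_notMem (fun hxj => Set.disjoint_left.1 (hYd hj) hxj hj₀), smul_zero]
  · simp only [not_exists] at hx
    simp [Set.indicator_of_notMem (hx _)]

section Lp

variable {α : Type*} [MeasurableSpace α] {μ : Measure α}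

theorem eLpNorm_ofReal_rpow_eq_lintegral {E : Type*} [ENorm E] {p : ℝ} (hp : 0 < p) (f : α → E) :
    eLpNorm f (ENNReal.ofReal p) μ ^ p = ∫⁻ x, ‖f x‖ₑ ^ p ∂μ := by
  rw [eLpNorm_eq_eLpNorm' (by simpa using hp) ENNReal.ofReal_ne_top,
    ENNReal.toReal_ofReal hp.le, lintegral_rpow_enorm_eq_rpow_eLpNorm' hp]

theorem sum_setLIntegral_le_lintegral {ι : Type*} [Fintype ι] {X : ι → Set α}
    (hXm : ∀ i, MeasurableSet (X i)) (hXd : Pairwise (Function.onFun Disjoint X)) (f : α → ℝ≥0∞) :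
    ∑ i, ∫⁻ x in X i, f x ∂μ ≤ ∫⁻ x, f x ∂μ := by
  calc ∑ i, ∫⁻ x in X i, f x ∂μ = ∫⁻ x in ⋃ i, X i, f x ∂μ := by
        rw [lintegral_iUnion hXm hXd, tsum_fintype]
    _ ≤ ∫⁻ x, f x ∂μ := setLIntegral_le_lintegral _ _

variable {𝕜 E : Type*} [NormedField 𝕜] [NormedAddCommGroup E] [NormedSpace 𝕜 E] {q : ℝ≥0∞}
  {ι : Type*}

theorem MeasureTheory.Lp.coeFn_sum_smul (s : Finset ι) (c : ι → 𝕜) (f : ι → Lp E q μ) :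
    ⇑(∑ j ∈ s, c j • f j) =ᵐ[μ] fun x => ∑ j ∈ s, c j • f j x := by
  induction s using Finset.cons_induction with
  | empty =>
    simp only [Finset.sum_empty]
    exact Lp.coeFn_zero E q μ
  | cons a s ha ih =>
    simp only [Finset.sum_cons]
    filter_upwards [Lp.coeFn_add (c a • f a) (∑ j ∈ s, c j • f j), Lp.coeFn_smul (c a) (f a), ih]
      with x hadd hsmul hsum
    rw [hadd, Pi.add_apply, hsmul, hsum, Pi.smul_apply]

theorem norm_sum_smul_le_of_ae_eq_indicator [Fintype ι] [Fact (1 ≤ q)] {Y : ι → Set α}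
    (hYd : Pairwise (Function.onFun Disjoint Y)) {c : ι → 𝕜} (hc : ∀ j, ‖c j‖ ≤ 1)
    (u : Lp E q μ) (v : ι → Lp E q μ) (hv : ∀ j, v j =ᵐ[μ] (Y j).indicator u) :
    ‖∑ j, c j • v j‖ ≤ ‖u‖ := by
  refine Lp.norm_le_norm_of_ae_le ?_
  filter_upwards [Lp.coeFn_sum_smul Finset.univ c v, ae_all_iff.2 hv] with x hsum hvx
  simp only [hsum, hvx]
  exact norm_sum_smul_indicator_le hYd hc u x

theorem sum_eLpNorm_restrict_rpow_le_of_forall_signs [NormedSpace ℝ E] [Fintype ι] [DecidableEq ι]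
    {p : ℝ} (hp : 1 ≤ p) {X : ι → Set α} (hXm : ∀ i, MeasurableSet (X i))
    (hXd : Pairwise (Function.onFun Disjoint X)) (F : ι → Lp E (ENNReal.ofReal p) μ) {M : ℝ≥0∞}
    (hM : ∀ ε : ι → ℤˣ, ‖∑ j, ((ε j : ℤ) : ℝ) • F j‖ₑ ≤ M) :
    ∑ i, eLpNorm (F i) (ENNReal.ofReal p) (μ.restrict (X i)) ^ p ≤ M ^ p := by
  have hp0 : 0 < p := zero_lt_one.trans_le hp
  set N : ℝ≥0∞ := (Fintype.card (ι → ℤˣ) : ℝ≥0∞)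
  set G : (ι → ℤˣ) → Lp E (ENNReal.ofReal p) μ := fun ε => ∑ j, ((ε j : ℤ) : ℝ) • F j
  have hGcoe : ∀ᵐ x ∂μ, ∀ ε, G ε x = ∑ j, ((ε j : ℤ) : ℝ) • F j x :=
    ae_all_iff.2 fun ε => Lp.coeFn_sum_smul Finset.univ _ F
  have hpointwise : ∀ᵐ x ∂μ, ∀ i, N * ‖F i x‖ₑ ^ p ≤ ∑ ε, ‖G ε x‖ₑ ^ p := by
    filter_upwards [hGcoe] with x hx i
    simp only [hx]
    exact card_mul_enorm_rpow_le_sum_signs hp (fun j => F j x) i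
  have hG (ε : ι → ℤˣ) : ∫⁻ x, ‖G ε x‖ₑ ^ p ∂μ ≤ M ^ p := by
    rw [← eLpNorm_ofReal_rpow_eq_lintegral hp0, ← Lp.enorm_def]
    exact ENNReal.rpow_le_rpow (hM ε) hp0.le
  have hGmeas (ε : ι → ℤˣ) : AEMeasurable (fun x => ‖G ε x‖ₑ ^ p) μ :=
    (Lp.aestronglyMeasurable (G ε)).enorm.pow_const p
  have hN : N ≠ 0 := by simp [N]
  refine (ENNReal.mul_le_mul_iff_right hN (ENNReal.natCast_ne_top _)).1 ?_
  calc N * ∑ i, eLpNorm (F i) (ENNReal.ofReal p) (μ.restrict (X i)) ^ p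
      = ∑ i, ∫⁻ x in X i, N * ‖F i x‖ₑ ^ p ∂μ := by
        simp only [Finset.mul_sum, eLpNorm_ofReal_rpow_eq_lintegral hp0,
          lintegral_const_mul' N _ (ENNReal.natCast_ne_top _)]
    _ ≤ ∑ i, ∫⁻ x in X i, ∑ ε, ‖G ε x‖ₑ ^ p ∂μ :=
        Finset.sum_le_sum fun i _ =>
          lintegral_mono_ae (ae_restrict_of_ae (hpointwise.mono fun x hx => hx i))
    _ ≤ ∫⁻ x, ∑ ε, ‖G ε x‖ₑ ^ p ∂μ := sum_setLIntegral_le_lintegral hXm hXd _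
    _ = ∑ ε, ∫⁻ x, ‖G ε x‖ₑ ^ p ∂μ := lintegral_finsetSum' _ fun ε _ => hGmeas ε
    _ ≤ ∑ _ε : ι → ℤˣ, M ^ p := Finset.sum_le_sum fun ε _ => hG ε
    _ = N * M ^ p := by rw [Finset.sum_const, Finset.card_univ, nsmul_eq_mul]

end Lp

theorem rpow_sum_toReal_rpow_le {ι : Type*} [Fintype ι] {a : ι → ℝ≥0∞} {p C : ℝ} (hp : 0 < p)
    (hC : 0 ≤ C) (h : ∑ i, a i ^ p ≤ ENNReal.ofReal C ^ p) :
    (∑ i, (a i).toReal ^ p) ^ (1 / p) ≤ C := by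
  have hfin : ∀ i ∈ Finset.univ, a i ^ p ≠ ∞ := fun i hi =>
    ne_top_of_le_ne_top (ENNReal.rpow_ne_top_of_nonneg hp.le ENNReal.ofReal_ne_top)
      ((Finset.single_le_sum (fun j _ => zero_le) hi).trans h)
  calc (∑ i, (a i).toReal ^ p) ^ (1 / p) = (∑ i, a i ^ p).toReal ^ (1 / p) := by
        simp only [← ENNReal.toReal_rpow, ENNReal.toReal_sum hfin]
    _ ≤ (ENNReal.ofReal C ^ p).toReal ^ (1 / p) := by
        refine Real.rpow_le_rpow ENNReal.toReal_nonneg ?_ (by positivity)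
        exact ENNReal.toReal_mono (ENNReal.rpow_ne_top_of_nonneg hp.le ENNReal.ofReal_ne_top) h
    _ = C := by
        rw [← ENNReal.toReal_rpow, ENNReal.toReal_ofReal hC, ← Real.rpow_mul hC,
          mul_one_div_cancel hp.ne', Real.rpow_one]

theorem partition_operator_estimate_general
    {α : Type*} [MeasurableSpace α] (μ : Measure α)
    (p : ℝ) (hp : 1 < p) [Fact (1 ≤ ENNReal.ofReal p)] (n : ℕ)
    (X Y : Fin n → Set α)
    (hXm : ∀ i, MeasurableSet (X i)) (hXd : Pairwise (Function.onFun Disjoint X))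
    (hYd : Pairwise (Function.onFun Disjoint Y))
    (R : (Lp ℂ 1 μ →L[ℂ] Lp ℂ (ENNReal.ofReal p) μ) →L[ℂ] Lp ℂ (ENNReal.ofReal p) μ)
    (U : Lp ℂ 1 μ →L[ℂ] Lp ℂ (ENNReal.ofReal p) μ)
    (V : Fin n → (Lp ℂ 1 μ →L[ℂ] Lp ℂ (ENNReal.ofReal p) μ))
    (hV : ∀ (i : Fin n) (a : Lp ℂ 1 μ),
      (V i a : α → ℂ) =ᵐ[μ] (Y i).indicator (U a : α → ℂ)) :
    (∑ i, (eLpNorm (R (V i)) (ENNReal.ofReal p) (μ.restrict (X i))).toReal ^ p) ^ (1 / p)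
      ≤ ‖R‖ * ‖U‖ := by
  refine rpow_sum_toReal_rpow_le (zero_lt_one.trans hp) (by positivity) ?_
  refine sum_eLpNorm_restrict_rpow_le_of_forall_signs hp.le hXm hXd _ fun ε => ?_
  set c : Fin n → ℝ := fun j => ((ε j : ℤ) : ℝ)
  have hc (j : Fin n) : ‖c j‖ ≤ 1 := by rw [Real.norm_eq_abs, abs_unit_intCast]
  have hW : ‖∑ j, c j • V j‖ ≤ ‖U‖ := by
    refine ContinuousLinearMap.opNorm_le_bound _ (norm_nonneg U) fun a => ?_
    rw [sum_apply]
    exact (norm_sum_smul_le_of_ae_eq_indicator hYd hc (U a) (fun j => V j a) (hV · a)).trans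
      (U.le_opNorm a)
  have hRW : ∑ j, c j • R (V j) = R (∑ j, c j • V j) := by
    simp only [map_sum, ContinuousLinearMap.map_smul_of_tower]
  rw [hRW, ← ofReal_norm]
  exact ENNReal.ofReal_le_ofReal ((R.le_opNorm _).trans (by gcongr))

/-- let `(Ω,μ)` be a measure space, `p ∈ (1,∞)`, and `{X₁,…,Xₙ}`,
`{Y₁,…,Yₙ}` measurable partitions of `Ω`. For every bounded linear operator
`R : B(L¹(Ω), L^p(Ω)) → L^p(Ω)` and every `U ∈ B(L¹(Ω), L^p(Ω))`, one has
`(Σᵢ ‖χ_{Xᵢ}·R(χ_{Yᵢ}U)‖_p^p)^{1/p} ≤ ‖R‖ ‖U‖`. Here the operator `χ_{Yᵢ}U` (written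
`V i` below) is characterized by `(χ_{Yᵢ}U)(a) = χ_{Yᵢ}·U(a)` a.e. for all `a ∈ L¹(Ω)`,
and `‖χ_{Xᵢ}·g‖_p` is expressed as the `L^p`-norm of `g` over `Xᵢ`. -/
theorem partition_operator_estimate
    {α : Type*} [MeasurableSpace α] (μ : Measure α)
    (p : ℝ) (hp : 1 < p) [Fact (1 ≤ ENNReal.ofReal p)] (n : ℕ)
    (X Y : Fin n → Set α)
    (hXm : ∀ i, MeasurableSet (X i)) (hXd : Pairwise (Function.onFun Disjoint X))
    (hXu : (⋃ i, X i) = Set.univ)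
    (hYm : ∀ i, MeasurableSet (Y i)) (hYd : Pairwise (Function.onFun Disjoint Y))
    (hYu : (⋃ i, Y i) = Set.univ)
    (R : (Lp ℂ 1 μ →L[ℂ] Lp ℂ (ENNReal.ofReal p) μ) →L[ℂ] Lp ℂ (ENNReal.ofReal p) μ)
    (U : Lp ℂ 1 μ →L[ℂ] Lp ℂ (ENNReal.ofReal p) μ)
    (V : Fin n → (Lp ℂ 1 μ →L[ℂ] Lp ℂ (ENNReal.ofReal p) μ))
    (hV : ∀ (i : Fin n) (a : Lp ℂ 1 μ),
      (V i a : α → ℂ) =ᵐ[μ] (Y i).indicator (U a : α → ℂ)) :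
    (∑ i, (eLpNorm (R (V i)) (ENNReal.ofReal p) (μ.restrict (X i))).toReal ^ p) ^ (1 / p)
      ≤ ‖R‖ * ‖U‖ :=
  partition_operator_estimate_general μ p hp n X Y hXm hXd hYd R U V hV
end

section
/- Let (Ω,μ) be a measure space, let p ∈ (1,∞) with conjugate index q (1/p + 1/q = 1), let U ∈ B(L¹(Ω), L^p(Ω)), let f₁,…,fₙ ∈ L^q(Ω) have pairwise disjoint supports, and let x₁,…,xₙ ∈ L^p(Ω) have pairwise disjoint supports. Define T : L¹(Ω) → L^p(Ω) by T(a) = Σ_{i=1}^{n} (∫_Ω U(a) fᵢ dμ) xᵢ. Then T is a bounded linear operator and ‖T‖ ≤ ‖U‖ · max{‖fᵢ‖_q ‖xᵢ‖_p : 1 ≤ i ≤ n}. -/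
/-!
Write `T = V ∘ U` with `V g = ∑ᵢ (∫ g fᵢ) xᵢ` on `L^p`; it suffices that
`‖V‖ ≤ M := maxᵢ ‖fᵢ‖_q ‖xᵢ‖_p`. As the `xᵢ` have disjoint supports,
`‖V g‖_p^p = ∑ᵢ |∫ g fᵢ|^p ‖xᵢ‖_p^p`. Hölder's inequality on the support `Sᵢ` of `fᵢ` gives
`|∫ g fᵢ| ≤ ‖g‖_{L^p(Sᵢ)} ‖fᵢ‖_q`, hence `‖V g‖_p^p ≤ M^p ∑ᵢ ‖g‖_{L^p(Sᵢ)}^p ≤ M^p ‖g‖_p^p`,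
the last step because the `Sᵢ` are disjoint.
-/

open MeasureTheory Function
open scoped ENNReal

section Disjointness

variable {α ι E : Type*} [MeasurableSpace α] {μ : Measure α}

lemma aedisjoint_support_of_mul_ae_eq_zero {R : Type*} [MulZeroClass R] [NoZeroDivisors R]
    {u v : α → R} (h : (fun t => u t * v t) =ᵐ[μ] 0) :
    AEDisjoint μ (support u) (support v) := by
  rw [AEDisjoint, ← support_mul]
  exact (Measure.measure_support_eq_zero_iff μ).2 h

lemma ae_pairwise_eq_zero_or_eq_zero_of_aedisjoint [Countable ι] [Zero E] {x : ι → α → E}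
    (h : Pairwise (AEDisjoint μ on fun i => support (x i))) :
    ∀ᵐ t ∂μ, Pairwise fun i j => x i t = 0 ∨ x j t = 0 := by
  have hij : ∀ i j, ∀ᵐ t ∂μ, i ≠ j → x i t = 0 ∨ x j t = 0 := by
    intro i j
    by_cases heq : i = j
    · exact .of_forall fun _ hne => absurd heq hne
    filter_upwards [measure_eq_zero_iff_ae_notMem.1 (h heq)] with t ht _
    simpa [not_and_or, or_iff_not_imp_left] using ht
  filter_upwards [ae_all_iff.2 fun i => ae_all_iff.2 (hij i)] with t ht i j hne
  exact ht i j hne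

end Disjointness

lemma enorm_sum_rpow_of_pairwise {ι E : Type*} [Fintype ι] [NormedAddCommGroup E]
    {a : ι → E} (ha : Pairwise fun i j => a i = 0 ∨ a j = 0) {r : ℝ} (hr : 0 < r) :
    ‖∑ i, a i‖ₑ ^ r = ∑ i, ‖a i‖ₑ ^ r := by
  by_cases h : ∀ i, a i = 0
  · simp [h, ENNReal.zero_rpow_of_pos hr]
  push Not at h
  obtain ⟨i, hi⟩ := h
  have hzero : ∀ j, j ≠ i → a j = 0 := fun j hj => (ha hj).resolve_right hi
  rw [Finset.sum_eq_single i (fun j _ hj => hzero j hj) (by simp),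
    Finset.sum_eq_single i (fun j _ hj => by simp [hzero j hj, ENNReal.zero_rpow_of_pos hr])
      (by simp)]

section LpSeminorm

variable {α ι 𝕜 E : Type*} [MeasurableSpace α] {μ : Measure α} [Fintype ι]
  [NormedAddCommGroup E] {P : ℝ≥0∞}

lemma eLpNorm_rpow_toReal_eq_lintegral (hP0 : P ≠ 0) (hPtop : P ≠ ∞) (g : α → E) :
    eLpNorm g P μ ^ P.toReal = ∫⁻ t, ‖g t‖ₑ ^ P.toReal ∂μ := by
  rw [eLpNorm_eq_eLpNorm' hP0 hPtop,
    lintegral_rpow_enorm_eq_rpow_eLpNorm' (ENNReal.toReal_pos hP0 hPtop)]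

lemma sum_eLpNorm_restrict_rpow_le (hP0 : P ≠ 0) (hPtop : P ≠ ∞) (g : α → E) {s : ι → Set α}
    (hs : ∀ i, NullMeasurableSet (s i) μ) (hd : Pairwise (AEDisjoint μ on s)) :
    ∑ i, eLpNorm g P (μ.restrict (s i)) ^ P.toReal ≤ eLpNorm g P μ ^ P.toReal := by
  simp_rw [eLpNorm_rpow_toReal_eq_lintegral hP0 hPtop]
  rw [← lintegral_biUnion_finset₀ (hd.set_pairwise _) fun i _ => hs i]
  exact setLIntegral_le_lintegral _ _

variable [NormedField 𝕜] [NormedSpace 𝕜 E]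

lemma eLpNorm_sum_smul_rpow_of_aedisjoint (hP0 : P ≠ 0) (hPtop : P ≠ ∞) (c : ι → 𝕜)
    {x : ι → α → E} (hx : ∀ i, AEStronglyMeasurable (x i) μ)
    (hd : Pairwise (AEDisjoint μ on fun i => support (x i))) :
    eLpNorm (fun t => ∑ i, c i • x i t) P μ ^ P.toReal
      = ∑ i, ‖c i‖ₑ ^ P.toReal * eLpNorm (x i) P μ ^ P.toReal := by
  have hr : 0 < P.toReal := ENNReal.toReal_pos hP0 hPtop
  simp_rw [eLpNorm_rpow_toReal_eq_lintegral hP0 hPtop]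
  calc ∫⁻ t, ‖∑ i, c i • x i t‖ₑ ^ P.toReal ∂μ
      = ∫⁻ t, ∑ i, ‖c i‖ₑ ^ P.toReal * ‖x i t‖ₑ ^ P.toReal ∂μ := by
        refine lintegral_congr_ae <|
          (ae_pairwise_eq_zero_or_eq_zero_of_aedisjoint hd).mono fun t ht => ?_
        have hsmul : Pairwise fun i j => c i • x i t = 0 ∨ c j • x j t = 0 :=
          fun i j hij => (ht hij).imp (by simp [·]) (by simp [·])
        simp only [enorm_sum_rpow_of_pairwise hsmul hr, enorm_smul,
          ENNReal.mul_rpow_of_nonneg _ _ hr.le]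
    _ = ∑ i, ‖c i‖ₑ ^ P.toReal * ∫⁻ t, ‖x i t‖ₑ ^ P.toReal ∂μ := by
        rw [lintegral_finsetSum' _ fun i _ => ((hx i).enorm.pow_const _).const_mul _]
        exact Finset.sum_congr rfl fun i _ =>
          lintegral_const_mul'' _ ((hx i).enorm.pow_const _)

end LpSeminorm

section Holder

variable {α ι 𝕜 E : Type*} [MeasurableSpace α] {μ : Measure α} [Fintype ι] [RCLike 𝕜]
  [NormedAddCommGroup E] [NormedSpace 𝕜 E] {P Q : ℝ≥0∞} [P.HolderConjugate Q]

lemma enorm_integral_mul_le_eLpNorm_restrict_support_mul {g f : α → 𝕜}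
    (hg : AEStronglyMeasurable g μ) (hf : AEStronglyMeasurable f μ) :
    ‖∫ t, g t * f t ∂μ‖ₑ ≤ eLpNorm g P (μ.restrict (support f)) * eLpNorm f Q μ := by
  have hvanish : ∀ t ∉ support f, g t * f t = 0 := fun t ht => by
    rw [notMem_support.1 ht, mul_zero]
  rw [← setIntegral_eq_integral_of_forall_compl_eq_zero hvanish]
  calc ‖∫ t in support f, g t * f t ∂μ‖ₑ
      ≤ eLpNorm (g • f) 1 (μ.restrict (support f)) := by
        rw [eLpNorm_one_eq_lintegral_enorm]
        exact enorm_integral_le_lintegral_enorm _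
    _ ≤ eLpNorm g P (μ.restrict (support f)) * eLpNorm f Q (μ.restrict (support f)) :=
        eLpNorm_smul_le_mul_eLpNorm hf.restrict hg.restrict
    _ ≤ eLpNorm g P (μ.restrict (support f)) * eLpNorm f Q μ := by
        gcongr
        exact Measure.restrict_le_self

theorem eLpNorm_sum_integral_mul_smul_le (hPtop : P ≠ ∞) {g : α → 𝕜}
    (hg : AEStronglyMeasurable g μ) {f : ι → α → 𝕜} (hf : ∀ i, AEStronglyMeasurable (f i) μ)
    (hfd : Pairwise (AEDisjoint μ on fun i => support (f i))) {x : ι → α → E}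
    (hx : ∀ i, AEStronglyMeasurable (x i) μ)
    (hxd : Pairwise (AEDisjoint μ on fun i => support (x i))) {M : ℝ≥0∞}
    (hM : ∀ i, eLpNorm (f i) Q μ * eLpNorm (x i) P μ ≤ M) :
    eLpNorm (fun t => ∑ i, (∫ s, g s * f i s ∂μ) • x i t) P μ ≤ M * eLpNorm g P μ := by
  have hP0 : P ≠ 0 := ENNReal.HolderConjugate.ne_zero P Q
  set r := P.toReal
  have hr : 0 < r := ENNReal.toReal_pos hP0 hPtop
  rw [← ENNReal.rpow_le_rpow_iff hr, eLpNorm_sum_smul_rpow_of_aedisjoint hP0 hPtop _ hx hxd,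
    ENNReal.mul_rpow_of_nonneg _ _ hr.le]
  calc ∑ i, ‖∫ s, g s * f i s ∂μ‖ₑ ^ r * eLpNorm (x i) P μ ^ r
      ≤ ∑ i, eLpNorm g P (μ.restrict (support (f i))) ^ r * M ^ r := by
        refine Finset.sum_le_sum fun i _ => ?_
        calc ‖∫ s, g s * f i s ∂μ‖ₑ ^ r * eLpNorm (x i) P μ ^ r
            ≤ (eLpNorm g P (μ.restrict (support (f i))) * eLpNorm (f i) Q μ) ^ r
                * eLpNorm (x i) P μ ^ r := by
              gcongr
              exact enorm_integral_mul_le_eLpNorm_restrict_support_mul hg (hf i)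
          _ = eLpNorm g P (μ.restrict (support (f i))) ^ r
                * (eLpNorm (f i) Q μ * eLpNorm (x i) P μ) ^ r := by
              rw [ENNReal.mul_rpow_of_nonneg _ _ hr.le, ENNReal.mul_rpow_of_nonneg _ _ hr.le,
                mul_assoc]
          _ ≤ eLpNorm g P (μ.restrict (support (f i))) ^ r * M ^ r := by
              gcongr
              exact hM i
    _ = M ^ r * ∑ i, eLpNorm g P (μ.restrict (support (f i))) ^ r := by
        rw [← Finset.sum_mul, mul_comm]
    _ ≤ M ^ r * eLpNorm g P μ ^ r := by
        gcongr
        exact sum_eLpNorm_restrict_rpow_le hP0 hPtop g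
          (fun i => (hf i).aemeasurable.nullMeasurable (measurableSet_singleton 0).compl) hfd

end Holder

namespace MeasureTheory.Lp

variable {α ι 𝕜 E : Type*} [MeasurableSpace α] {μ : Measure α} [Fintype ι] [RCLike 𝕜]
  [NormedAddCommGroup E] [NormedSpace 𝕜 E] {P Q : ℝ≥0∞} [P.HolderConjugate Q]
  [Fact (1 ≤ P)] [Fact (1 ≤ Q)]

variable (μ P) in
noncomputable def sumPairingSMul (f : ι → Lp 𝕜 Q μ) (x : ι → Lp E P μ) :
    Lp 𝕜 P μ →L[𝕜] Lp E P μ :=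
  ∑ i, (((ContinuousLinearMap.mul 𝕜 𝕜).lpPairing μ P Q).flip (f i)).smulRight (x i)

lemma sumPairingSMul_apply (f : ι → Lp 𝕜 Q μ) (x : ι → Lp E P μ) (g : Lp 𝕜 P μ) :
    sumPairingSMul μ P f x g = ∑ i, (∫ t, g t * f i t ∂μ) • x i := by
  simp [sumPairingSMul, ContinuousLinearMap.lpPairing_eq_integral]

lemma norm_sumPairingSMul_le (hPtop : P ≠ ∞) {f : ι → Lp 𝕜 Q μ}
    (hf : Pairwise (AEDisjoint μ on fun i => support (f i))) {x : ι → Lp E P μ}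
    (hx : Pairwise (AEDisjoint μ on fun i => support (x i))) :
    ‖sumPairingSMul μ P f x‖ ≤ ⨆ i, ‖f i‖ * ‖x i‖ := by
  set M := ⨆ i, ‖f i‖ * ‖x i‖
  have hM0 : 0 ≤ M := Real.iSup_nonneg fun i => by positivity
  have hM : ∀ i, eLpNorm (f i) Q μ * eLpNorm (x i) P μ ≤ ENNReal.ofReal M := fun i => by
    rw [← enorm_def, ← enorm_def, ← ofReal_norm, ← ofReal_norm,
      ← ENNReal.ofReal_mul (by positivity)]
    exact ENNReal.ofReal_le_ofReal (le_ciSup (Finite.bddAbove_range fun i => ‖f i‖ * ‖x i‖) i)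
  refine ContinuousLinearMap.opNorm_le_bound _ hM0 fun g => ?_
  have hcoe : ⇑(sumPairingSMul μ P f x g)
      =ᵐ[μ] fun t => ∑ i, (∫ s, g s * f i s ∂μ) • x i t := by
    rw [sumPairingSMul_apply]
    filter_upwards [coeFn_fun_finsetSum Finset.univ fun i => (∫ s, g s * f i s ∂μ) • x i,
      ae_all_iff.2 fun i => coeFn_smul (∫ s, g s * f i s ∂μ) (x i)] with t hsum hsmul
    simp only [hsum, hsmul, Pi.smul_apply]
  rw [norm_def, norm_def, eLpNorm_congr_ae hcoe, ← ENNReal.toReal_ofReal hM0,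
    ← ENNReal.toReal_mul]
  exact ENNReal.toReal_mono (by finiteness) <|
    eLpNorm_sum_integral_mul_smul_le hPtop (Lp.aestronglyMeasurable g)
      (fun i => Lp.aestronglyMeasurable (f i)) hf (fun i => Lp.aestronglyMeasurable (x i)) hx hM

end MeasureTheory.Lp

/-- let `(Ω,μ)` be a measure space, `p ∈ (1,∞)` with conjugate index `q`,
`U ∈ B(L¹(Ω), L^p(Ω))`, let `f₁,…,fₙ ∈ L^q(Ω)` have pairwise disjoint supports and
`x₁,…,xₙ ∈ L^p(Ω)` have pairwise disjoint supports. Then the map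
`T : a ↦ Σᵢ (∫ U(a) fᵢ dμ) xᵢ` is a bounded linear operator `L¹(Ω) → L^p(Ω)` with
`‖T‖ ≤ ‖U‖ · maxᵢ ‖fᵢ‖_q ‖xᵢ‖_p`. -/
theorem rank_n_operator_norm_estimate
    {α : Type*} [MeasurableSpace α] (μ : Measure α)
    (p q : ℝ) (hp : 1 < p) (hq : 1 / p + 1 / q = 1)
    [Fact (1 ≤ ENNReal.ofReal p)] [Fact (1 ≤ ENNReal.ofReal q)]
    (U : Lp ℂ 1 μ →L[ℂ] Lp ℂ (ENNReal.ofReal p) μ)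
    (n : ℕ) (f : Fin n → Lp ℂ (ENNReal.ofReal q) μ)
    (x : Fin n → Lp ℂ (ENNReal.ofReal p) μ)
    (hf : ∀ i j, i ≠ j → (fun t => (f i : α → ℂ) t * (f j : α → ℂ) t) =ᵐ[μ] 0)
    (hx : ∀ i j, i ≠ j → (fun t => (x i : α → ℂ) t * (x j : α → ℂ) t) =ᵐ[μ] 0) :
    ∃ T : Lp ℂ 1 μ →L[ℂ] Lp ℂ (ENNReal.ofReal p) μ,
      (∀ a : Lp ℂ 1 μ,
        T a = ∑ i, (∫ t, (U a : α → ℂ) t * (f i : α → ℂ) t ∂μ) • x i) ∧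
      ‖T‖ ≤ ‖U‖ * ⨆ i, ‖f i‖ * ‖x i‖ := by
  have hpq : p.HolderConjugate q :=
    Real.holderConjugate_iff.2 ⟨hp, by simpa only [one_div] using hq⟩
  have := hpq.ennrealOfReal
  let V := Lp.sumPairingSMul μ (ENNReal.ofReal p) f x
  refine ⟨V.comp U, fun a => Lp.sumPairingSMul_apply f x (U a), ?_⟩
  have hV : ‖V‖ ≤ ⨆ i, ‖f i‖ * ‖x i‖ :=
    Lp.norm_sumPairingSMul_le ENNReal.ofReal_ne_top
      (fun i j hij => aedisjoint_support_of_mul_ae_eq_zero (hf i j hij))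
      (fun i j hij => aedisjoint_support_of_mul_ae_eq_zero (hx i j hij))
  calc ‖V.comp U‖ ≤ ‖V‖ * ‖U‖ := V.opNorm_comp_le U
    _ ≤ (⨆ i, ‖f i‖ * ‖x i‖) * ‖U‖ := by gcongr
    _ = ‖U‖ * ⨆ i, ‖f i‖ * ‖x i‖ := mul_comm _ _
end

section
/- Let S be a nonempty set, let p ∈ [1,∞), and let ℓ^{∞,p}(S) denote the Banach space of functions U : S × S → ℂ with norm ‖U‖ = sup_{s∈S} (Σ_{t∈S} |U(s,t)|^p)^{1/p} < ∞. Let R : ℓ^{∞,p}(S) → ℓ^p(S) be a bounded linear operator, let U ∈ ℓ^{∞,p}(S), and for each s ∈ S let U_s ∈ ℓ^{∞,p}(S) satisfy |U_s(r,t)| ≤ |δ_s(t) U(r,t)| for all r,t ∈ S (that is, U_s(r,t) = 0 whenever t ≠ s, and |U_s(r,s)| ≤ |U(r,s)|). Then (Σ_{s∈S} |R(U_s)(s)|^p)^{1/p} ≤ ‖U‖ ‖R‖. -/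
/-!
Average over random signs. For a finite `F ⊆ S` and signs `ε : F → {±1}`, the operator
`W ε = ∑ ε s • Uₛ` has its pieces in disjoint columns, so `‖W ε‖ ≤ ‖U‖`, and the `F`-diagonal of
`R (W ε)`, re-signed by `ε`, has `ℓ^p` norm at most `‖R (W ε)‖ ≤ ‖R‖ ‖U‖`. By orthogonality of the
signs, the average over `ε` of these re-signed diagonals is exactly `∑_{s ∈ F} R(Uₛ)(s) δₛ`.
-/

open scoped ENNReal
open Function

def rademacher (b : Bool) : ℂ := if b then 1 else -1

@[simp] lemma rademacher_mul_self (b : Bool) : rademacher b * rademacher b = 1 := by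
  cases b <;> simp [rademacher]

@[simp] lemma norm_rademacher (b : Bool) : ‖rademacher b‖ = 1 := by
  cases b <;> simp [rademacher]

@[simp] lemma rademacher_not (b : Bool) : rademacher (!b) = -rademacher b := by
  cases b <;> simp [rademacher]

theorem sum_rademacher_mul_rademacher {ι : Type*} [Fintype ι] [DecidableEq ι] (i j : ι) :
    ∑ ε : ι → Bool, rademacher (ε i) * rademacher (ε j) =
      if i = j then 2 ^ Fintype.card ι else 0 := by
  split_ifs with hij
  · subst hij
    simp
  · have hflip : Involutive fun ε : ι → Bool => update ε i (!ε i) := fun ε => by simp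
    have h := Equiv.sum_comp (hflip.toPerm _) fun ε => rademacher (ε i) * rademacher (ε j)
    simp only [Involutive.coe_toPerm, update_self, update_of_ne (Ne.symm hij),
      rademacher_not, neg_mul, Finset.sum_neg_distrib] at h
    exact neg_eq_self.mp h

theorem sum_rademacher_mul_sum_rademacher_mul {ι : Type*} [Fintype ι] [DecidableEq ι]
    (a : ι → ℂ) (i : ι) :
    ∑ ε : ι → Bool, rademacher (ε i) * ∑ j, rademacher (ε j) * a j =
      2 ^ Fintype.card ι * a i := by
  simp only [Finset.mul_sum, ← mul_assoc]
  rw [Finset.sum_comm]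
  simp [← Finset.sum_mul, sum_rademacher_mul_rademacher]

theorem norm_sum_le_of_injective {ι S E : Type*} [Fintype ι] [SeminormedAddCommGroup E]
    {σ : ι → S} (hσ : Injective σ) (t : S) (f : ι → E) {B : ℝ} (hB : 0 ≤ B)
    (hf : ∀ i, σ i ≠ t → f i = 0) (hfB : ∀ i, σ i = t → ‖f i‖ ≤ B) : ‖∑ i, f i‖ ≤ B := by
  by_cases ht : ∃ j, σ j = t
  · obtain ⟨j, rfl⟩ := ht
    rw [Finset.sum_eq_single j (fun i _ hij => hf i (hσ.ne hij)) (by simp)]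
    exact hfB j rfl
  · push Not at ht
    simpa [hf _ (ht _)] using hB

theorem lp.norm_sum_single_le_of_injective {ι S E : Type*} [Fintype ι] [DecidableEq S]
    [NormedAddCommGroup E] {p : ℝ≥0∞} [Fact (1 ≤ p)] {σ : ι → S} (hσ : Injective σ) (x : ι → E)
    (y : lp (fun _ : S => E) p) (h : ∀ i, ‖x i‖ ≤ ‖y (σ i)‖) :
    ‖∑ i, lp.single (E := fun _ : S => E) p (σ i) (x i)‖ ≤ ‖y‖ := by
  refine lp.norm_mono (zero_lt_one.trans_le Fact.out).ne' fun t => ?_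
  rw [lp.coeFn_sum, Finset.sum_apply]
  refine norm_sum_le_of_injective hσ t _ (norm_nonneg _) (fun i hi => ?_) (fun i hi => ?_)
  · exact lp.single_apply_ne p _ _ (Ne.symm hi)
  · subst hi; simpa using h i

theorem norm_sum_single_apply_le_opNorm_mul {X S ι : Type*} [NormedAddCommGroup X]
    [NormedSpace ℂ X] [Fintype ι] [DecidableEq ι] [DecidableEq S] {p : ℝ≥0∞} [Fact (1 ≤ p)]
    (T : X →L[ℂ] lp (fun _ : S => ℂ) p) {σ : ι → S} (hσ : Injective σ) (v : ι → X) {M : ℝ}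
    (hM : ∀ ε : ι → Bool, ‖∑ i, rademacher (ε i) • v i‖ ≤ M) :
    ‖∑ i, lp.single (E := fun _ : S => ℂ) p (σ i) (T (v i) (σ i))‖ ≤ ‖T‖ * M := by
  set D := ∑ i, lp.single (E := fun _ : S => ℂ) p (σ i) (T (v i) (σ i))
  set Y : (ι → Bool) → lp (fun _ : S => ℂ) p := fun ε =>
    ∑ i, lp.single p (σ i) (rademacher (ε i) * T (∑ j, rademacher (ε j) • v j) (σ i))
  have hY : ∀ ε, ‖Y ε‖ ≤ ‖T‖ * M := fun ε =>
    (lp.norm_sum_single_le_of_injective hσ _ _ fun i => by simp).trans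
      ((T.le_opNorm _).trans (mul_le_mul_of_nonneg_left (hM ε) (norm_nonneg T)))
  have hsum : ∑ ε, Y ε = (2 ^ Fintype.card ι : ℂ) • D := by
    have hT : ∀ (ε : ι → Bool) i, T (∑ j, rademacher (ε j) • v j) (σ i) =
        ∑ j, rademacher (ε j) * T (v j) (σ i) := by
      intro ε i
      simp only [map_sum, map_smul, lp.coeFn_sum, Finset.sum_apply, lp.coeFn_smul, Pi.smul_apply,
        smul_eq_mul]
    calc ∑ ε, Y ε = ∑ i, lp.single p (σ i)
          (∑ ε : ι → Bool, rademacher (ε i) * ∑ j, rademacher (ε j) * T (v j) (σ i)) := by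
          simp only [Y, hT]
          rw [Finset.sum_comm]
          exact Finset.sum_congr rfl fun i _ =>
            (map_sum (lp.singleAddMonoidHom (E := fun _ : S => ℂ) p (σ i)) _ _).symm
      _ = ∑ i, lp.single p (σ i) ((2 ^ Fintype.card ι : ℂ) • T (v i) (σ i)) := by
          simp only [sum_rademacher_mul_sum_rademacher_mul, smul_eq_mul]
      _ = (2 ^ Fintype.card ι : ℂ) • D := by
          simp only [D, Finset.smul_sum, lp.single_smul]
  have h2D : (2 : ℝ) ^ Fintype.card ι * ‖D‖ ≤ 2 ^ Fintype.card ι * (‖T‖ * M) :=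
    calc (2 : ℝ) ^ Fintype.card ι * ‖D‖ = ‖∑ ε, Y ε‖ := by simp [hsum, norm_smul]
      _ ≤ ∑ ε, ‖Y ε‖ := norm_sum_le _ _
      _ ≤ ∑ _ε : ι → Bool, ‖T‖ * M := Finset.sum_le_sum fun ε _ => hY ε
      _ = 2 ^ Fintype.card ι * (‖T‖ * M) := by simp
  exact le_of_mul_le_mul_left h2D (by positivity)

theorem norm_sum_smul_le_of_column_le {ι S : Type*} [Fintype ι] {p : ℝ≥0∞} [Fact (1 ≤ p)]
    {σ : ι → S} (hσ : Injective σ) (U : lp (fun _ : S => lp (fun _ : S => ℂ) p) ∞)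
    (V : ι → lp (fun _ : S => lp (fun _ : S => ℂ) p) ∞)
    (hV : ∀ i r t, t ≠ σ i → V i r t = 0) (hVU : ∀ i r, ‖V i r (σ i)‖ ≤ ‖U r (σ i)‖)
    (c : ι → ℂ) (hc : ∀ i, ‖c i‖ ≤ 1) :
    ‖∑ i, c i • V i‖ ≤ ‖U‖ := by
  refine lp.norm_mono ENNReal.top_ne_zero fun r =>
    lp.norm_mono (zero_lt_one.trans_le Fact.out).ne' fun t => ?_
  simp only [lp.coeFn_sum, Finset.sum_apply, lp.coeFn_smul, Pi.smul_apply]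
  refine norm_sum_le_of_injective hσ t _ (norm_nonneg _) (fun i hi => ?_) (fun i hi => ?_)
  · simp [hV i r t (Ne.symm hi)]
  · subst hi
    exact (norm_smul_le _ _).trans <|
      (mul_le_of_le_one_left (norm_nonneg _) (hc i)).trans (hVU i r)

theorem tsum_nnnorm_rpow_rpow_le {S E : Type*} [SeminormedAddCommGroup E] {p : ℝ} (hp : 0 < p)
    (a : S → E) {C : ℝ} (hC : 0 ≤ C) (h : ∀ F : Finset S, ∑ s ∈ F, ‖a s‖ ^ p ≤ C ^ p) :
    (∑' s, (‖a s‖₊ : ℝ≥0∞) ^ p) ^ (1 / p) ≤ ENNReal.ofReal C := by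
  suffices hsum : ∑' s, (‖a s‖₊ : ℝ≥0∞) ^ p ≤ ENNReal.ofReal C ^ p by
    calc (∑' s, (‖a s‖₊ : ℝ≥0∞) ^ p) ^ (1 / p) ≤ (ENNReal.ofReal C ^ p) ^ (1 / p) := by gcongr
      _ = ENNReal.ofReal C := by
          rw [← ENNReal.rpow_mul, mul_one_div_cancel hp.ne', ENNReal.rpow_one]
  rw [ENNReal.tsum_eq_iSup_sum, ENNReal.ofReal_rpow_of_nonneg hC hp.le]
  refine iSup_le fun F => ?_
  calc ∑ s ∈ F, (‖a s‖₊ : ℝ≥0∞) ^ p = ENNReal.ofReal (∑ s ∈ F, ‖a s‖ ^ p) := by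
        rw [ENNReal.ofReal_sum_of_nonneg fun s _ => by positivity]
        refine Finset.sum_congr rfl fun s _ => ?_
        rw [← ENNReal.ofReal_rpow_of_nonneg (norm_nonneg _) hp.le, ofReal_norm]
        rfl
    _ ≤ ENNReal.ofReal (C ^ p) := ENNReal.ofReal_le_ofReal (h F)

theorem diagonal_estimate_discrete_general
    (S : Type*) [DecidableEq S] (p : ℝ) [Fact (1 ≤ ENNReal.ofReal p)]
    (R : lp (fun _ : S => lp (fun _ : S => ℂ) (ENNReal.ofReal p)) ∞
          →L[ℂ] lp (fun _ : S => ℂ) (ENNReal.ofReal p))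
    (U : lp (fun _ : S => lp (fun _ : S => ℂ) (ENNReal.ofReal p)) ∞)
    (Us : S → lp (fun _ : S => lp (fun _ : S => ℂ) (ENNReal.ofReal p)) ∞)
    (hUs : ∀ s r t : S, ‖(Us s : ∀ _ : S, lp (fun _ : S => ℂ) (ENNReal.ofReal p)) r t‖
      ≤ if t = s then ‖(U : ∀ _ : S, lp (fun _ : S => ℂ) (ENNReal.ofReal p)) r t‖ else 0) :
    (∑' s : S, (‖(R (Us s) : ∀ _ : S, ℂ) s‖₊ : ℝ≥0∞) ^ p) ^ (1 / p)
      ≤ ENNReal.ofReal (‖U‖ * ‖R‖) := by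
  have hp : 0 < p := ENNReal.ofReal_pos.mp (zero_lt_one.trans_le Fact.out)
  have hp' : (ENNReal.ofReal p).toReal = p := ENNReal.toReal_ofReal hp.le
  refine tsum_nnnorm_rpow_rpow_le hp _ (by positivity) fun F => ?_
  have hdiag : ‖∑ s : F, lp.single (E := fun _ : S => ℂ) (ENNReal.ofReal p) (s : S) (R (Us s) s)‖
      ≤ ‖R‖ * ‖U‖ :=
    norm_sum_single_apply_le_opNorm_mul R Subtype.val_injective _ fun ε =>
      norm_sum_smul_le_of_column_le Subtype.val_injective U _
        (fun s r t ht => norm_le_zero_iff.mp (by simpa [ht] using hUs s r t))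
        (fun s r => by simpa using hUs s r s) _ fun s => (norm_rademacher _).le
  rw [Finset.sum_coe_sort F fun s =>
    lp.single (E := fun _ : S => ℂ) (ENNReal.ofReal p) s (R (Us s) s)] at hdiag
  have hnorm := lp.norm_sum_single (by rwa [hp']) (fun s => R (Us s) s) F
  rw [hp'] at hnorm
  rw [← hnorm, mul_comm]
  gcongr

/-- let `S` be a nonempty set and `p ∈ [1,∞)`. Regard
`ℓ^{∞,p}(S) = {U : S×S → ℂ : sup_s (Σ_t |U(s,t)|^p)^{1/p} < ∞}` as the space
`lp (fun _ : S => ℓ^p(S)) ∞`. Let `R : ℓ^{∞,p}(S) → ℓ^p(S)` be a bounded linear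
operator, `U ∈ ℓ^{∞,p}(S)`, and for each `s ∈ S` let `Uₛ ∈ ℓ^{∞,p}(S)` satisfy
`|Uₛ(r,t)| ≤ |δₛ(t) U(r,t)|` for all `r,t`. Then
`(Σ_s |R(Uₛ)(s)|^p)^{1/p} ≤ ‖U‖ ‖R‖`. -/
theorem diagonal_estimate_discrete
    (S : Type*) [Nonempty S] [DecidableEq S] (p : ℝ) (hp : 1 ≤ p) [Fact (1 ≤ ENNReal.ofReal p)]
    (R : lp (fun _ : S => lp (fun _ : S => ℂ) (ENNReal.ofReal p)) ∞
          →L[ℂ] lp (fun _ : S => ℂ) (ENNReal.ofReal p))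
    (U : lp (fun _ : S => lp (fun _ : S => ℂ) (ENNReal.ofReal p)) ∞)
    (Us : S → lp (fun _ : S => lp (fun _ : S => ℂ) (ENNReal.ofReal p)) ∞)
    (hUs : ∀ s r t : S, ‖(Us s : ∀ _ : S, lp (fun _ : S => ℂ) (ENNReal.ofReal p)) r t‖
      ≤ if t = s then ‖(U : ∀ _ : S, lp (fun _ : S => ℂ) (ENNReal.ofReal p)) r t‖ else 0) :
    (∑' s : S, (‖(R (Us s) : ∀ _ : S, ℂ) s‖₊ : ℝ≥0∞) ^ p) ^ (1 / p)
      ≤ ENNReal.ofReal (‖U‖ * ‖R‖) :=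
  diagonal_estimate_discrete_general S p R U Us hUs
end
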